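/- With h = 𝟙 ∈ ℝᵗ (all-ones) and noise covariance Ñ = σ²·(((t+1)/t)·I_t − (1/t)·𝟙𝟙ᵀ), the quantity 𝟙ᵀÑ⁻¹𝟙 ≤ t²/σ²; hence the information leaked to t colluding servers satisfies η_c ≤ log₂(1 + r²t²/σ²). -/

import Mathlib

/-!
The all-ones vector `𝟙` is an eigenvector of `Ñ = a • I - b • 𝟙𝟙ᵀ` with eigenvalue
`a - b t = σ²/t`, and `Ñ` is invertible because a vector in its kernel has coordinate sum zero
and hence vanishes. Thus `Ñ⁻¹ 𝟙 = (t/σ²) 𝟙` and `𝟙ᵀ Ñ⁻¹ 𝟙 = t²/σ²`, with equality.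
-/

open Matrix

namespace Matrix

variable {m n K : Type*} [Fintype n] [Field K]

theorem of_one_mulVec (v : n → K) :
    (of fun (_ : m) (_ : n) => (1 : K)) *ᵥ v = fun _ => ∑ i, v i := by
  ext
  simp [mulVec, dotProduct]

variable [DecidableEq n]

theorem inv_mulVec_eq_inv_smul_of_mulVec_eq_smul {M : Matrix n n K} (hM : IsUnit M.det)
    {v : n → K} {c : K} (hv : M *ᵥ v = c • v) : M⁻¹ *ᵥ v = c⁻¹ • v := by
  have hv' : v = c • M⁻¹ *ᵥ v := by
    rw [← mulVec_smul, ← hv, mulVec_mulVec, nonsing_inv_mul _ hM, one_mulVec]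
  rcases eq_or_ne c 0 with rfl | hc
  · rw [zero_smul] at hv'
    rw [hv', mulVec_zero, smul_zero]
  · calc M⁻¹ *ᵥ v = c⁻¹ • c • M⁻¹ *ᵥ v := (inv_smul_smul₀ hc _).symm
      _ = c⁻¹ • v := by rw [← hv']

theorem smul_one_sub_smul_of_one_mulVec (a b : K) (v : n → K) :
    (a • 1 - b • of fun _ _ => (1 : K) : Matrix n n K) *ᵥ v =
      a • v - (b * ∑ i, v i) • fun _ => 1 := by
  rw [sub_mulVec, smul_mulVec, smul_mulVec, one_mulVec, of_one_mulVec]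
  ext
  simp

theorem det_smul_one_sub_smul_of_one_ne_zero {a b : K} (ha : a ≠ 0)
    (hab : a - b * Fintype.card n ≠ 0) :
    (a • 1 - b • of fun _ _ => (1 : K) : Matrix n n K).det ≠ 0 := by
  intro h
  obtain ⟨v, hv0, hv⟩ := exists_mulVec_eq_zero_iff.mpr h
  rw [smul_one_sub_smul_of_one_mulVec, sub_eq_zero] at hv
  have hsum : (a - b * Fintype.card n) * ∑ i, v i = 0 := by
    have := congrArg (fun w => ∑ i, w i) hv
    simp only [Pi.smul_apply, smul_eq_mul, ← Finset.mul_sum, mul_one, Finset.sum_const,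
      Finset.card_univ, nsmul_eq_mul] at this
    linear_combination this
  rw [(mul_eq_zero.mp hsum).resolve_left hab, mul_zero, zero_smul, smul_eq_zero] at hv
  exact hv0 (hv.resolve_left ha)

theorem inv_smul_one_sub_smul_of_one_mulVec_one {a b : K} (ha : a ≠ 0)
    (hab : a - b * Fintype.card n ≠ 0) :
    (a • 1 - b • of fun _ _ => (1 : K) : Matrix n n K)⁻¹ *ᵥ (fun _ => 1) =
      (a - b * Fintype.card n)⁻¹ • fun _ => 1 := by
  refine inv_mulVec_eq_inv_smul_of_mulVec_eq_smul
    (det_smul_one_sub_smul_of_one_ne_zero ha hab).isUnit ?_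
  rw [smul_one_sub_smul_of_one_mulVec]
  ext
  simp

end Matrix

/-- With `h = 𝟙` and noise covariance `Ñ = σ²(((t+1)/t)I − (1/t)𝟙𝟙ᵀ)`, one has
`𝟙ᵀÑ⁻¹𝟙 ≤ t²/σ²`; hence `η_c ≤ log₂(1 + r²·𝟙ᵀÑ⁻¹𝟙)` implies `η_c ≤ log₂(1 + r²t²/σ²)`. -/
theorem collusion_leakage_bound (t : ℕ) (ht : 1 ≤ t) (σ : ℝ) (hσ : 0 < σ)
    (Ntil : Matrix (Fin t) (Fin t) ℝ)
    (hN : Ntil = σ^2 • ((((t : ℝ) + 1) / t) • (1 : Matrix (Fin t) (Fin t) ℝ)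
        - ((t : ℝ))⁻¹ • Matrix.of (fun _ _ => (1 : ℝ)))) :
    dotProduct (fun _ => (1 : ℝ)) (Ntil⁻¹.mulVec (fun _ => 1)) ≤ t^2 / σ^2 ∧
    (∀ ηc r : ℝ,
      ηc ≤ Real.logb 2 (1 + r^2 *
        dotProduct (fun _ => (1 : ℝ)) (Ntil⁻¹.mulVec (fun _ => 1))) →
      ηc ≤ Real.logb 2 (1 + r^2 * t^2 / σ^2)) := by
  have ht0 : (t : ℝ) ≠ 0 := by positivity
  have hσ0 : σ ^ 2 ≠ 0 := by positivity
  rw [smul_sub, smul_smul, smul_smul] at hN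
  have heig :
      σ ^ 2 * (((t : ℝ) + 1) / t) - σ ^ 2 * (t : ℝ)⁻¹ * Fintype.card (Fin t) = σ ^ 2 / t := by
    rw [Fintype.card_fin]
    field_simp
    ring
  have hquad : dotProduct (fun _ => (1 : ℝ)) (Ntil⁻¹ *ᵥ fun _ => 1) = t ^ 2 / σ ^ 2 := by
    rw [hN, inv_smul_one_sub_smul_of_one_mulVec_one (by positivity) (by rw [heig]; positivity),
      heig]
    simp only [dotProduct, inv_div, Pi.smul_apply, smul_eq_mul, mul_one, Finset.sum_const,
      Finset.card_univ, Fintype.card_fin, nsmul_eq_mul]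
    field_simp
  refine ⟨hquad.le, fun ηc r h => ?_⟩
  rwa [hquad, ← mul_div_assoc] at h
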